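/- Fix a mode i with 1 ≤ i ≤ d. Let Q ∈ ℝ^{(r1⋯r_{i−1}r_{i+1}⋯r_d)×r_i}, let U_k^1 ∈ ℝ^{n_k×r_k} have orthonormal columns (U_k^{1,T}U_k^1 = I) for k = 1,…,i−1, and let U_k^0 ∈ ℝ^{n_k×r_k} be arbitrary for k = i+1,…,d. Define V^T = Qᵀ·(⊗_{k=1}^{i−1} I_{r_k} ⊗ ⊗_{k=i+1}^d U_k^{0,T}) and V̄^T = Qᵀ·(⊗_{k=1}^{i−1} U_k^{1,T} ⊗ ⊗_{k=i+1}^d U_k^{0,T}), with Kronecker factors ordered compatibly with the i-mode matricization. Then: (a) for every K ∈ ℝ^{n_i×r_i}: ten_i(K·Vᵀ) ×_{k=1}^{i−1} U_k^1 = ten_i(K·V̄ᵀ); and (b) for every tensor G ∈ ℝ^{n1×⋯×nd}: mat_i(G ×_{k=1}^{i−1} U_k^{1,T})·V = mat_i(G)·V̄. Consequently the K-step differential equations of the nested Tucker integrator (Algorithm 1) and of the Tucker projector-splitting integrator (Algorithm 2) are identical. -/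
import Mathlib


open Matrix Set

namespace TuckerPaper

/-! ### Basic tensor formalism

A tensor of order `D` with dimensions `n : Fin D → ℕ` is a real-valued function on the
product index set `Idx n`.  `matr n i` is the `i`-mode matricization, `tenr n i` its
inverse (tensorization), `mlprod B` the multilinear (Tucker) product with the family of
matrices `B`, and `kronFam i B` the Kronecker product of the matrices `B j` over all
modes `j ≠ i`, indexed compatibly with the `i`-mode matricization. -/

variable {D : ℕ}

/-- Index set of a tensor with dimensions `n`. -/
abbrev Idx (n : Fin D → ℕ) : Type := (j : Fin D) → Fin (n j)

/-- Real tensors with dimensions `n`. -/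
abbrev Tensor (n : Fin D → ℕ) : Type := Idx n → ℝ

/-- Column index set of the `i`-mode matricization (all modes except `i`). -/
abbrev CIdx (n : Fin D → ℕ) (i : Fin D) : Type := (j : {j : Fin D // j ≠ i}) → Fin (n j.1)

/-- `i`-mode matricization of a tensor. -/
def matr (n : Fin D → ℕ) (i : Fin D) (X : Tensor n) : Matrix (Fin (n i)) (CIdx n i) ℝ :=
  fun k m => X (fun j => if h : j = i then Fin.cast (congrArg n h).symm k else m ⟨j, h⟩)

/-- Inverse of the `i`-mode matricization (tensorization). -/
def tenr (n : Fin D → ℕ) (i : Fin D) (M : Matrix (Fin (n i)) (CIdx n i) ℝ) : Tensor n :=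
  fun idx => M (idx i) (fun j => idx j.1)

/-- Multilinear (Tucker) product `X ×₁ B 1 ×₂ B 2 ⋯ ×_D B D`. -/
noncomputable def mlprod {n m : Fin D → ℕ} (B : ∀ j, Matrix (Fin (m j)) (Fin (n j)) ℝ)
    (X : Tensor n) : Tensor m :=
  fun idx => ∑ kk : Idx n, (∏ j, B j (idx j) (kk j)) * X kk

/-- Kronecker product of the family `B j` over all modes `j ≠ i`, with indices
ordered compatibly with the `i`-mode matricization. -/
noncomputable def kronFam {p q : Fin D → ℕ} (i : Fin D)
    (B : ∀ j, Matrix (Fin (p j)) (Fin (q j)) ℝ) : Matrix (CIdx p i) (CIdx q i) ℝ :=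
  fun a b => ∏ j, B j.1 (a j) (b j)

/-- Frobenius norm of a tensor. -/
noncomputable def tfrob {n : Fin D → ℕ} (X : Tensor n) : ℝ := Real.sqrt (∑ idx, X idx ^ 2)

/-- Frobenius norm of a matrix. -/
noncomputable def mfrob {α β : Type*} [Fintype α] [Fintype β] (A : Matrix α β ℝ) : ℝ :=
  Real.sqrt (∑ a, ∑ b, A a b ^ 2)

/-- Cast of the row index of a matrix along an equality of dimensions. -/
def rcast {a b : ℕ} (h : a = b) {c : Type*} (M : Matrix (Fin a) c ℝ) : Matrix (Fin b) c ℝ :=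
  fun x y => M (Fin.cast h.symm x) y

/-- Cast of the column index of a matrix along an equality of dimensions. -/
def ccast {a b : ℕ} (h : a = b) {c : Type*} (M : Matrix c (Fin a) ℝ) : Matrix c (Fin b) ℝ :=
  fun x y => M x (Fin.cast h.symm y)

/-- Cast of a `CIdx` column index of a matrix along a family of equalities of dimensions. -/
def cidxcast {p q : Fin D → ℕ} (i : Fin D) (h : ∀ j : Fin D, j ≠ i → p j = q j) {c : Type*}
    (M : Matrix c (CIdx p i) ℝ) : Matrix c (CIdx q i) ℝ :=
  fun x m => M x (fun j => Fin.cast (h j.1 j.2).symm (m j))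

/-- `P` is the orthogonal projection onto the column space of `A`. -/
def IsOrthProjOnto {α β : Type*} [Fintype α] [Fintype β] (P : Matrix α α ℝ)
    (A : Matrix α β ℝ) : Prop :=
  Pᵀ = P ∧ P * P = P ∧ (∀ v, P.mulVec v ∈ LinearMap.range A.mulVecLin) ∧
    ∀ v ∈ LinearMap.range A.mulVecLin, P.mulVec v = v

/-- Mixed dimensions appearing in the mode-`i` subproblem of the nested Tucker
integrator: `r j` for the already processed modes `j < i` and `n j` for the modes
`j ≥ i`. -/
def mdims (n r : Fin D → ℕ) (i : Fin D) : Fin D → ℕ := fun j => if j.1 < i.1 then r j else n j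

lemma mdims_self (n r : Fin D → ℕ) (i : Fin D) : mdims n r i i = n i := if_neg (lt_irrefl _)

lemma mdims_lt (n r : Fin D → ℕ) {i j : Fin D} (h : j.1 < i.1) : mdims n r i j = r j := if_pos h

lemma mdims_not_lt (n r : Fin D → ℕ) {i j : Fin D} (h : ¬ j.1 < i.1) : mdims n r i j = n j :=
  if_neg h

lemma lt_last_of_ne {d : ℕ} {j : Fin (d + 1)} (hj : j ≠ Fin.last d) : j.1 < (Fin.last d).1 :=
  Fin.val_lt_last hj

/-- Family of matrices realizing `X ↦ X ×_{k<i} (U k)ᵀ` as a multilinear product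
`Tensor n → Tensor (mdims n r i)`. -/
noncomputable def projFam (n r : Fin D → ℕ) (i : Fin D)
    (U : ∀ j, Matrix (Fin (n j)) (Fin (r j)) ℝ) :
    ∀ j, Matrix (Fin (mdims n r i j)) (Fin (n j)) ℝ :=
  fun j => if h : j.1 < i.1 then rcast (mdims_lt n r h).symm (U j)ᵀ
    else rcast (mdims_not_lt n r h).symm 1

/-- Family of matrices realizing `X ↦ X ×_{k<i} U k` as a multilinear product
`Tensor (mdims n r i) → Tensor n`. -/
noncomputable def liftFam (n r : Fin D → ℕ) (i : Fin D)
    (U : ∀ j, Matrix (Fin (n j)) (Fin (r j)) ℝ) :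
    ∀ j, Matrix (Fin (n j)) (Fin (mdims n r i j)) ℝ :=
  fun j => if h : j.1 < i.1 then ccast (mdims_lt n r h).symm (U j)
    else ccast (mdims_not_lt n r h).symm 1

/-- Family of matrices realizing `X ↦ X ×_{k≥i, k≠i?} ...` namely identity for `k < i`
and `U k` for `k ≥ i`, as a multilinear product `Tensor r → Tensor (mdims n r i)`. -/
noncomputable def postFam (n r : Fin D → ℕ) (i : Fin D)
    (U : ∀ j, Matrix (Fin (n j)) (Fin (r j)) ℝ) :
    ∀ j, Matrix (Fin (mdims n r i j)) (Fin (r j)) ℝ :=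
  fun j => if h : j.1 < i.1 then rcast (mdims_lt n r h).symm 1
    else rcast (mdims_not_lt n r h).symm (U j)

/-- Kronecker factor family `I_{r_k}` for `k < i` and `(U k)ᵀ` for `k > i`, used to
build the corange matrix `V_i^{0,T}` of the nested Tucker integrator. -/
noncomputable def vFam (n r : Fin D → ℕ) (i : Fin D)
    (U : ∀ j, Matrix (Fin (n j)) (Fin (r j)) ℝ) :
    ∀ j, Matrix (Fin (r j)) (Fin (mdims n r i j)) ℝ :=
  fun j => if h : j.1 < i.1 then ccast (mdims_lt n r h).symm 1
    else ccast (mdims_not_lt n r h).symm (U j)ᵀ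

/-- The matrix `V_i^{0,T} = Q_i^{0,T} (⨂_{k<i} I_{r_k} ⊗ ⨂_{k>i} (U_k^0)ᵀ)` of the
nested Tucker integrator (Algorithm 1). -/
noncomputable def VT (n r : Fin D → ℕ) (i : Fin D)
    (U : ∀ j, Matrix (Fin (n j)) (Fin (r j)) ℝ) (Q : Matrix (CIdx r i) (Fin (r i)) ℝ) :
    Matrix (Fin (r i)) (CIdx (mdims n r i) i) ℝ :=
  Qᵀ * kronFam i (vFam n r i U)

/-- The matrix `V̄_i^{0,T} = Q_i^{0,T} (⨂_{k<i} (U_k^1)ᵀ ⊗ ⨂_{k>i} (U_k^0)ᵀ)` of the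
Tucker projector-splitting integrator of Lubich (Algorithm 2). -/
noncomputable def VTbar (n r : Fin D → ℕ) (i : Fin D)
    (U1 U0 : ∀ j, Matrix (Fin (n j)) (Fin (r j)) ℝ) (Q : Matrix (CIdx r i) (Fin (r i)) ℝ) :
    Matrix (Fin (r i)) (CIdx n i) ℝ :=
  Qᵀ * kronFam i (fun j => if j.1 < i.1 then (U1 j)ᵀ else (U0 j)ᵀ)


/-! helpers -/

def glue (m : Fin D → ℕ) (i : Fin D) (k : Fin (m i)) (c : CIdx m i) : Idx m :=
  fun j => if h : j = i then Fin.cast (congrArg m h).symm k else c ⟨j, h⟩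

@[simp] lemma glue_self (m : Fin D → ℕ) (i : Fin D) (k : Fin (m i)) (c : CIdx m i) :
    glue m i k c i = k := by
  simp [glue, Fin.ext_iff]

@[simp] lemma glue_ne (m : Fin D → ℕ) (i : Fin D) (k : Fin (m i)) (c : CIdx m i)
    (j : {j : Fin D // j ≠ i}) : glue m i k c j.1 = c j := dif_neg j.2

lemma matr_glue (n : Fin D → ℕ) (i : Fin D) (X : Tensor n) (k : Fin (n i)) (m : CIdx n i) :
    matr n i X k m = X (glue n i k m) := rfl

def splitIdx (m : Fin D → ℕ) (i : Fin D) : Idx m ≃ Fin (m i) × CIdx m i where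
  toFun kk := (kk i, fun j => kk j.1)
  invFun p := glue m i p.1 p.2
  left_inv kk := by
    funext j
    by_cases h : j = i
    · subst h; simp
    · exact dif_neg h
  right_inv p := by
    refine Prod.ext (glue_self m i p.1 p.2) (funext fun j => glue_ne m i p.1 p.2 j)

lemma sum_idx (m : Fin D → ℕ) (i : Fin D) (f : Idx m → ℝ) :
    ∑ kk : Idx m, f kk = ∑ k : Fin (m i), ∑ c : CIdx m i, f (glue m i k c) := by
  have h1 : ∑ kk : Idx m, f kk = ∑ p : Fin (m i) × CIdx m i, f (glue m i p.1 p.2) :=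
    Fintype.sum_equiv (splitIdx m i) _ _
      (fun kk => congrArg f (((splitIdx m i).left_inv kk).symm))
  rw [h1, Fintype.sum_prod_type]

lemma prod_split (i : Fin D) (g : Fin D → ℝ) :
    ∏ j, g j = g i * ∏ j : {j : Fin D // j ≠ i}, g j.1 := by
  rw [Fintype.prod_eq_mul_prod_compl i g]
  congr 1
  exact Finset.prod_subtype _ (fun x => by simp) _

lemma sum_cast {a b : ℕ} (h : a = b) (f : Fin a → ℝ) (g : Fin b → ℝ)
    (hfg : ∀ x, f x = g (Fin.cast h x)) : ∑ x, f x = ∑ z, g z :=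
  Fintype.sum_equiv (finCongr h) _ _ hfg

lemma prod_sum_subtype (i : Fin D) (p : Fin D → ℕ)
    (f : (j : {j : Fin D // j ≠ i}) → Fin (p j.1) → ℝ) :
    ∏ j : {j : Fin D // j ≠ i}, (∑ x, f j x) = ∑ c : CIdx p i, ∏ j, f j (c j) := by
  rw [Finset.prod_univ_sum (fun _ => Finset.univ) f, Fintype.piFinset_univ]

lemma mode_sum (n r : Fin D → ℕ) (i : Fin D) (U1 U0 : ∀ j, Matrix (Fin (n j)) (Fin (r j)) ℝ)
    (j : Fin D) (a : Fin (r j)) (m : Fin (n j)) :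
    ∑ x : Fin (mdims n r i j), liftFam n r i U1 j m x * vFam n r i U0 j a x
      = (if j.1 < i.1 then (U1 j)ᵀ else (U0 j)ᵀ) a m := by
  by_cases h : j.1 < i.1
  · simp only [liftFam, vFam, dif_pos h, if_pos h, ccast, Matrix.transpose_apply]
    rw [sum_cast (mdims_lt n r h) _
      (fun z : Fin (r j) => U1 j m z * (1 : Matrix (Fin (r j)) (Fin (r j)) ℝ) a z)
      (fun x => rfl)]
    simp [Matrix.one_apply, mul_ite]
  · simp only [liftFam, vFam, dif_neg h, if_neg h, ccast, Matrix.transpose_apply]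
    rw [sum_cast (mdims_not_lt n r h) _
      (fun z : Fin (n j) => (1 : Matrix (Fin (n j)) (Fin (n j)) ℝ) m z * U0 j z a)
      (fun x => rfl)]
    simp [Matrix.one_apply, ite_mul]

lemma proj_lift (n r : Fin D → ℕ) (i : Fin D) (U : ∀ j, Matrix (Fin (n j)) (Fin (r j)) ℝ)
    (j : Fin D) (x : Fin (mdims n r i j)) (y : Fin (n j)) :
    projFam n r i U j x y = liftFam n r i U j y x := by
  by_cases h : j.1 < i.1
  · simp only [projFam, liftFam, dif_pos h, rcast, ccast, Matrix.transpose_apply]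
  · simp only [projFam, liftFam, dif_neg h, rcast, ccast, Matrix.transpose_apply]
    simp [Matrix.one_apply, eq_comm]

lemma core (n r : Fin D → ℕ) (i : Fin D) (U1 U0 : ∀ j, Matrix (Fin (n j)) (Fin (r j)) ℝ)
    (a : CIdx r i) (m : CIdx n i) :
    ∑ c : CIdx (mdims n r i) i,
        (∏ j, liftFam n r i U1 j.1 (m j) (c j)) * (∏ j, vFam n r i U0 j.1 (a j) (c j))
      = ∏ j : {j : Fin D // j ≠ i},
          (if (j.1).1 < i.1 then (U1 j.1)ᵀ else (U0 j.1)ᵀ) (a j) (m j) := by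
  have h1 : ∀ c : CIdx (mdims n r i) i,
      (∏ j, liftFam n r i U1 j.1 (m j) (c j)) * (∏ j, vFam n r i U0 j.1 (a j) (c j))
        = ∏ j, liftFam n r i U1 j.1 (m j) (c j) * vFam n r i U0 j.1 (a j) (c j) :=
    fun c => (Finset.prod_mul_distrib).symm
  simp_rw [h1]
  rw [← prod_sum_subtype i (mdims n r i)
    (fun j x => liftFam n r i U1 j.1 (m j) x * vFam n r i U0 j.1 (a j) x)]
  exact Finset.prod_congr rfl fun j _ => mode_sum n r i U1 U0 j.1 (a j) (m j)


lemma part_a (n r : Fin D → ℕ) (i : Fin D) (Q : Matrix (CIdx r i) (Fin (r i)) ℝ)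
    (U1 U0 : ∀ j, Matrix (Fin (n j)) (Fin (r j)) ℝ) (K : Matrix (Fin (n i)) (Fin (r i)) ℝ) :
    mlprod (liftFam n r i U1) (tenr (mdims n r i) i
        (rcast (mdims_self n r i).symm (K * VT n r i U0 Q)))
      = tenr n i (K * VTbar n r i U1 U0 Q) := by
  classical
  funext idx
  have e : mdims n r i i = n i := mdims_self n r i
  set M := K * VT n r i U0 Q with hM
  set P : CIdx (mdims n r i) i → ℝ :=
    fun c => ∏ j : {j : Fin D // j ≠ i}, liftFam n r i U1 j.1 (idx j.1) (c j) with hP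
  have lift_i : ∀ (x : Fin (n i)) (y : Fin (mdims n r i i)),
      liftFam n r i U1 i x y = (1 : Matrix (Fin (n i)) (Fin (n i)) ℝ) x (Fin.cast e y) := by
    intro x y
    simp only [liftFam, dif_neg (lt_irrefl i.1)]
    rfl
  have main : mlprod (liftFam n r i U1) (tenr (mdims n r i) i
      (rcast (mdims_self n r i).symm M)) idx
      = ∑ c : CIdx (mdims n r i) i, P c * M (idx i) c := by
    show (∑ kk : Idx (mdims n r i), (∏ j, liftFam n r i U1 j (idx j) (kk j)) *
        M (Fin.cast e (kk i)) (fun j => kk j.1)) = _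
    rw [sum_idx (mdims n r i) i]
    have step1 : ∀ (k : Fin (mdims n r i i)) (c : CIdx (mdims n r i) i),
        (∏ j, liftFam n r i U1 j (idx j) (glue (mdims n r i) i k c j)) *
          M (Fin.cast e (glue (mdims n r i) i k c i)) (fun j => glue (mdims n r i) i k c j.1)
        = (1 : Matrix (Fin (n i)) (Fin (n i)) ℝ) (idx i) (Fin.cast e k) *
            (P c * M (Fin.cast e k) c) := by
      intro k c
      rw [prod_split i (fun j => liftFam n r i U1 j (idx j) (glue (mdims n r i) i k c j))]
      simp only [glue_self, glue_ne, lift_i]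
      ring
    simp only [step1]
    have step2 : ∀ k : Fin (mdims n r i i),
        (∑ c : CIdx (mdims n r i) i, (1 : Matrix (Fin (n i)) (Fin (n i)) ℝ) (idx i)
            (Fin.cast e k) * (P c * M (Fin.cast e k) c))
        = (1 : Matrix (Fin (n i)) (Fin (n i)) ℝ) (idx i) (Fin.cast e k) *
            ∑ c : CIdx (mdims n r i) i, P c * M (Fin.cast e k) c :=
      fun k => (Finset.mul_sum _ _ _).symm
    simp only [step2]
    rw [sum_cast e _ (fun z => (1 : Matrix (Fin (n i)) (Fin (n i)) ℝ) (idx i) z *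
      ∑ c : CIdx (mdims n r i) i, P c * M z c) (fun k => rfl)]
    simp [Matrix.one_apply, ite_mul]
  rw [main]
  have expand : ∀ c : CIdx (mdims n r i) i, M (idx i) c
      = ∑ s, K (idx i) s * ∑ a : CIdx r i, Q a s *
          ∏ j : {j : Fin D // j ≠ i}, vFam n r i U0 j.1 (a j) (c j) := by
    intro c
    simp only [hM, VT, Matrix.mul_apply, Matrix.transpose_apply, kronFam]
  simp only [expand]
  show _ = (K * VTbar n r i U1 U0 Q) (idx i) (fun j => idx j.1)
  simp only [VTbar, Matrix.mul_apply, Matrix.transpose_apply, kronFam]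
  simp_rw [Finset.mul_sum]
  rw [Finset.sum_comm]
  refine Finset.sum_congr rfl fun s _ => ?_
  rw [Finset.sum_comm]
  refine Finset.sum_congr rfl fun a _ => ?_
  have hc := core n r i U1 U0 a (fun j => idx j.1)
  calc (∑ c : CIdx (mdims n r i) i, P c * (K (idx i) s * (Q a s *
          ∏ j : {j : Fin D // j ≠ i}, vFam n r i U0 j.1 (a j) (c j))))
      = ∑ c : CIdx (mdims n r i) i, (K (idx i) s * Q a s) *
          (P c * ∏ j : {j : Fin D // j ≠ i}, vFam n r i U0 j.1 (a j) (c j)) :=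
        Finset.sum_congr rfl fun c _ => by ring
    _ = (K (idx i) s * Q a s) * ∑ c : CIdx (mdims n r i) i,
          P c * ∏ j : {j : Fin D // j ≠ i}, vFam n r i U0 j.1 (a j) (c j) :=
        (Finset.mul_sum _ _ _).symm
    _ = K (idx i) s * (Q a s *
          ∏ j : {j : Fin D // j ≠ i},
            (if (j.1).1 < i.1 then (U1 j.1)ᵀ else (U0 j.1)ᵀ) (a j) (idx j.1)) := by
        rw [hP, hc]; ring


lemma part_b (n r : Fin D → ℕ) (i : Fin D) (Q : Matrix (CIdx r i) (Fin (r i)) ℝ)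
    (U1 U0 : ∀ j, Matrix (Fin (n j)) (Fin (r j)) ℝ) (G : Tensor n) :
    rcast (mdims_self n r i)
        (matr (mdims n r i) i (mlprod (projFam n r i U1) G)) * (VT n r i U0 Q)ᵀ
      = matr n i G * (VTbar n r i U1 U0 Q)ᵀ := by
  classical
  ext k0 s
  have e : mdims n r i i = n i := mdims_self n r i
  have proj_i : ∀ (x : Fin (mdims n r i i)) (y : Fin (n i)),
      projFam n r i U1 i x y = (1 : Matrix (Fin (n i)) (Fin (n i)) ℝ) (Fin.cast e x) y := by
    intro x y
    simp only [projFam, dif_neg (lt_irrefl i.1)]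
    rfl
  have main : ∀ c : CIdx (mdims n r i) i,
      matr (mdims n r i) i (mlprod (projFam n r i U1) G) (Fin.cast e.symm k0) c
        = ∑ m : CIdx n i,
            (∏ j : {j : Fin D // j ≠ i}, liftFam n r i U1 j.1 (m j) (c j)) *
              matr n i G k0 m := by
    intro c
    rw [matr_glue]
    show (∑ kk : Idx n, (∏ j, projFam n r i U1 j (glue (mdims n r i) i (Fin.cast e.symm k0) c j)
        (kk j)) * G kk) = _
    rw [sum_idx n i]
    have step1 : ∀ (k1 : Fin (n i)) (m : CIdx n i),
        (∏ j, projFam n r i U1 j (glue (mdims n r i) i (Fin.cast e.symm k0) c j)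
            (glue n i k1 m j)) * G (glue n i k1 m)
        = (1 : Matrix (Fin (n i)) (Fin (n i)) ℝ) k0 k1 *
            ((∏ j : {j : Fin D // j ≠ i}, liftFam n r i U1 j.1 (m j) (c j)) *
              matr n i G k1 m) := by
      intro k1 m
      rw [prod_split i]
      simp only [glue_self, glue_ne, proj_i, proj_lift]
      have hG : G (glue n i k1 m) = matr n i G k1 m := rfl
      have hk : Fin.cast e (Fin.cast e.symm k0) = k0 := by simp [Fin.ext_iff]
      rw [hG, hk]
      ring
    simp only [step1]
    have step2 : ∀ k1 : Fin (n i),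
        (∑ m : CIdx n i, (1 : Matrix (Fin (n i)) (Fin (n i)) ℝ) k0 k1 *
            ((∏ j : {j : Fin D // j ≠ i}, liftFam n r i U1 j.1 (m j) (c j)) *
              matr n i G k1 m))
        = (1 : Matrix (Fin (n i)) (Fin (n i)) ℝ) k0 k1 *
            ∑ m : CIdx n i,
              (∏ j : {j : Fin D // j ≠ i}, liftFam n r i U1 j.1 (m j) (c j)) *
                matr n i G k1 m :=
      fun k1 => (Finset.mul_sum _ _ _).symm
    simp only [step2]
    simp [Matrix.one_apply, ite_mul]
  simp only [Matrix.mul_apply, Matrix.transpose_apply, rcast]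
  simp only [main]
  have expand : ∀ c : CIdx (mdims n r i) i, VT n r i U0 Q s c
      = ∑ a : CIdx r i, Q a s *
          ∏ j : {j : Fin D // j ≠ i}, vFam n r i U0 j.1 (a j) (c j) := by
    intro c
    simp only [VT, Matrix.mul_apply, Matrix.transpose_apply, kronFam]
  have expand2 : ∀ m : CIdx n i, VTbar n r i U1 U0 Q s m
      = ∑ a : CIdx r i, Q a s *
          ∏ j : {j : Fin D // j ≠ i},
            (if (j.1).1 < i.1 then (U1 j.1)ᵀ else (U0 j.1)ᵀ) (a j) (m j) := by
    intro m
    simp only [VTbar, Matrix.mul_apply, Matrix.transpose_apply, kronFam]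
  simp only [expand, expand2]
  simp_rw [Finset.sum_mul, Finset.mul_sum]
  rw [Finset.sum_comm]
  refine Finset.sum_congr rfl fun m _ => ?_
  rw [Finset.sum_comm]
  refine Finset.sum_congr rfl fun a _ => ?_
  have hc := core n r i U1 U0 a m
  calc (∑ c : CIdx (mdims n r i) i,
          (∏ j : {j : Fin D // j ≠ i}, liftFam n r i U1 j.1 (m j) (c j)) * matr n i G k0 m *
            (Q a s * ∏ j : {j : Fin D // j ≠ i}, vFam n r i U0 j.1 (a j) (c j)))
      = ∑ c : CIdx (mdims n r i) i, (matr n i G k0 m * Q a s) *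
          ((∏ j : {j : Fin D // j ≠ i}, liftFam n r i U1 j.1 (m j) (c j)) *
            (∏ j : {j : Fin D // j ≠ i}, vFam n r i U0 j.1 (a j) (c j))) :=
        Finset.sum_congr rfl fun c _ => by ring
    _ = (matr n i G k0 m * Q a s) * ∑ c : CIdx (mdims n r i) i,
          (∏ j : {j : Fin D // j ≠ i}, liftFam n r i U1 j.1 (m j) (c j)) *
            (∏ j : {j : Fin D // j ≠ i}, vFam n r i U0 j.1 (a j) (c j)) :=
        (Finset.mul_sum _ _ _).symm
    _ = matr n i G k0 m * (Q a s *
          ∏ j : {j : Fin D // j ≠ i},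
            (if (j.1).1 < i.1 then (U1 j.1)ᵀ else (U0 j.1)ᵀ) (a j) (m j)) := by
        rw [hc]; ring


/-- **Equivalence of the K-step differential equations of the nested Tucker integrator
(Algorithm 1) and of the Tucker projector-splitting integrator (Algorithm 2).**
With `Vᵀ = Qᵀ (⨂_{k<i} I_{r_k} ⊗ ⨂_{k>i} (U_k⁰)ᵀ)` and
`V̄ᵀ = Qᵀ (⨂_{k<i} (U_k¹)ᵀ ⊗ ⨂_{k>i} (U_k⁰)ᵀ)`:
(a) `ten_i(K Vᵀ) ×_{k<i} U_k¹ = ten_i(K V̄ᵀ)` for every `K`;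
(b) `mat_i(G ×_{k<i} (U_k¹)ᵀ) V = mat_i(G) V̄` for every tensor `G`;
consequently the K-step vector fields of the two algorithms are identical. -/
theorem K_step_equations_agree
    {d : ℕ} (n r : Fin (d + 1) → ℕ) (i : Fin (d + 1))
    (Q : Matrix (CIdx r i) (Fin (r i)) ℝ)
    (U1 U0 : ∀ j, Matrix (Fin (n j)) (Fin (r j)) ℝ)
    (hU1 : ∀ j : Fin (d + 1), j.1 < i.1 → (U1 j)ᵀ * U1 j = 1) :
    (∀ K : Matrix (Fin (n i)) (Fin (r i)) ℝ,
      mlprod (liftFam n r i U1) (tenr (mdims n r i) i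
        (rcast (mdims_self n r i).symm (K * VT n r i U0 Q)))
      = tenr n i (K * VTbar n r i U1 U0 Q)) ∧
    (∀ G : Tensor n,
      rcast (mdims_self n r i)
          (matr (mdims n r i) i (mlprod (projFam n r i U1) G)) * (VT n r i U0 Q)ᵀ
      = matr n i G * (VTbar n r i U1 U0 Q)ᵀ) ∧
    (∀ (F : ℝ → Tensor n → Tensor n) (t : ℝ) (K : Matrix (Fin (n i)) (Fin (r i)) ℝ),
      rcast (mdims_self n r i) (matr (mdims n r i) i (mlprod (projFam n r i U1)
          (F t (mlprod (liftFam n r i U1) (tenr (mdims n r i) i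
            (rcast (mdims_self n r i).symm (K * VT n r i U0 Q)))))))
        * (VT n r i U0 Q)ᵀ
      = matr n i (F t (tenr n i (K * VTbar n r i U1 U0 Q))) * (VTbar n r i U1 U0 Q)ᵀ) := by
  refine ⟨part_a n r i Q U1 U0, part_b n r i Q U1 U0, fun F t K => ?_⟩
  rw [part_a n r i Q U1 U0 K]
  exact part_b n r i Q U1 U0 (F t (tenr n i (K * VTbar n r i U1 U0 Q)))

end TuckerPaper
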